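/- Let H be a complex Hilbert space and (e_i)_{i∈ℕ} an orthonormal sequence in H. For each i let S_i = θ_{e_1,e_i}, and for each j let R_j be the orthogonal projection of H onto the span of {e_1, …, e_j}. Then lim_i lim_j ⟨S_i R_j (e_i), e_1⟩ = 1 while lim_j lim_i ⟨S_i R_j (e_i), e_1⟩ = 0. -/

import Mathlib

open Filter Topology

noncomputable section

variable {H : Type} [NormedAddCommGroup H] [InnerProductSpace ℂ H] [CompleteSpace H]

/-- The rank-one operator `θ_{ξ,η} : γ ↦ ⟨γ,η⟩ξ`. -/
def rankOne (ξ η : H) : H →L[ℂ] H := (innerSL ℂ η).smulRight ξ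

/-- The orthogonal projection of `H` onto the span of `e 0, e 1, …, e j`, as an operator
`H →L[ℂ] H`. -/
def spanProj (e : ℕ → H) (j : ℕ) : H →L[ℂ] H :=
  haveI : FiniteDimensional ℂ ↥(Submodule.span ℂ (e '' Set.Iic j)) :=
    FiniteDimensional.span_of_finite ℂ ((Set.finite_Iic j).image e)
  haveI : CompleteSpace ↥(Submodule.span ℂ (e '' Set.Iic j)) :=
    FiniteDimensional.complete ℂ _
  (Submodule.span ℂ (e '' Set.Iic j)).subtypeL.comp
    (Submodule.orthogonalProjectionOnto (Submodule.span ℂ (e '' Set.Iic j)))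

lemma key_entry (e : ℕ → H) (he : Orthonormal ℂ e) (i j : ℕ) :
    (inner ℂ (rankOne (e 0) (e i) (spanProj e j (e i))) (e 0) : ℂ)
      = if i ≤ j then 1 else 0 := by
  haveI : FiniteDimensional ℂ ↥(Submodule.span ℂ (e '' Set.Iic j)) :=
    FiniteDimensional.span_of_finite ℂ ((Set.finite_Iic j).image e)
  haveI : CompleteSpace ↥(Submodule.span ℂ (e '' Set.Iic j)) :=
    FiniteDimensional.complete ℂ _
  have hP : spanProj e j (e i) = if i ≤ j then e i else 0 := by
    unfold spanProj
    split_ifs with hij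
    · have hmem : e i ∈ Submodule.span ℂ (e '' Set.Iic j) :=
        Submodule.subset_span ⟨i, hij, rfl⟩
      simpa using congrArg Subtype.val (Submodule.orthogonalProjectionOnto_mem_subspace_eq_self (K := Submodule.span ℂ (e '' Set.Iic j)) ⟨e i, hmem⟩)
    · have hperp : e i ∈ (Submodule.span ℂ (e '' Set.Iic j))ᗮ := by
        rw [Submodule.mem_orthogonal]
        intro u hu
        induction hu using Submodule.span_induction with
        | mem x hx =>
          obtain ⟨k, hk, rfl⟩ := hx
          have hk' : k ≠ i := fun h => hij (h ▸ hk)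
          simpa [hk'] using orthonormal_iff_ite.mp he k i
        | zero => simp
        | add x y _ _ hx hy => rw [inner_add_left, hx, hy, add_zero]
        | smul c x _ hx => rw [inner_smul_left, hx, mul_zero]
      simpa using congrArg Subtype.val
        (Submodule.orthogonalProjectionOnto_apply_of_mem_orthogonal hperp)
  have h00 : (inner ℂ (e 0) (e 0) : ℂ) = 1 := by simpa using orthonormal_iff_ite.mp he 0 0
  rw [hP]
  split_ifs with hij
  · have hii : (inner ℂ (e i) (e i) : ℂ) = 1 := by simpa using orthonormal_iff_ite.mp he i i
    simp [rankOne, ContinuousLinearMap.smulRight_apply, innerSL_apply_apply,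
      inner_smul_left, hii, h00, he.1 0, he.1 i]
  · simp [rankOne]

/-- **Statement 15.** Let `H` be a complex Hilbert space and `(e i)_{i ∈ ℕ}` an orthonormal
sequence in `H`. With `S i = θ_{e 0, e i}` and `R j` the orthogonal projection onto the span
of `e 0, …, e j`, we have `lim_i lim_j ⟨S i (R j (e i)), e 0⟩ = 1` while
`lim_j lim_i ⟨S i (R j (e i)), e 0⟩ = 0`. -/
theorem rankOne_proj_double_limits
    (e : ℕ → H) (he : Orthonormal ℂ e) :
    (∃ g : ℕ → ℂ,
      (∀ i, Tendsto (fun j => (inner ℂ (rankOne (e 0) (e i) (spanProj e j (e i))) (e 0) : ℂ))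
        atTop (𝓝 (g i))) ∧
      Tendsto g atTop (𝓝 1)) ∧
    (∃ h : ℕ → ℂ,
      (∀ j, Tendsto (fun i => (inner ℂ (rankOne (e 0) (e i) (spanProj e j (e i))) (e 0) : ℂ))
        atTop (𝓝 (h j))) ∧
      Tendsto h atTop (𝓝 0)) := by
  constructor
  · refine ⟨fun _ => 1, fun i => ?_, tendsto_const_nhds⟩
    refine Tendsto.congr' ?_ (tendsto_const_nhds (x := (1 : ℂ)))
    filter_upwards [eventually_ge_atTop i] with j hj
    rw [key_entry e he i j, if_pos hj]
  · refine ⟨fun _ => 0, fun j => ?_, tendsto_const_nhds⟩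
    refine Tendsto.congr' ?_ (tendsto_const_nhds (x := (0 : ℂ)))
    filter_upwards [eventually_gt_atTop j] with i hi
    rw [key_entry e he i j, if_neg (not_le.mpr hi)]
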